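/- Let Σ ⊂ (Y, α) be a hypersurface written as a transverse zero level set {h = 0} with associated contact field X (α(X) = h), and let Z be a contact vector field transverse to Σ with k = α(Z). Then along Γ = {k = 0} ∩ Σ one has dk(X) = −dh(Z); in particular if Z ⋔ Σ then dk(X) is nonvanishing along Γ. -/

import Mathlib

theorem LinearMap.apply_eq_neg_of_add_eq_mul_of_apply_eq_zero {R M : Type*} [CommRing R]
    [AddCommGroup M] [Module R M] {f α : M →ₗ[R] R} {ω : M →ₗ[R] M →ₗ[R] R} {Z v : M} {c : R}
    (h : ∀ w : M, f w + ω Z w = c * α w) (hv : α v = 0) : f v = -ω Z v := by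
  have hfv := h v
  rw [hv, mul_zero] at hfv
  exact eq_neg_of_add_eq_zero_left hfv

/-- At a point of `Γ = {k = 0} ∩ Σ`: from the contact vector field equations
`dk + ι_Z dα = dk(R)·α` and `dh + ι_X dα = dh(R)·α`, with `α X = h = 0` and
`α Z = k = 0` there, one gets `dk(X) = -dh(Z)`; in particular if `Z ⋔ Σ`
(i.e. `dh(Z) ≠ 0`) then `dk(X) ≠ 0`. -/
theorem stmt_14 {E : Type*} [AddCommGroup E] [Module ℝ E]
    (α dk dh : E →ₗ[ℝ] ℝ) (ω : E →ₗ[ℝ] E →ₗ[ℝ] ℝ)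
    (hanti : ∀ v w : E, ω v w = -ω w v)
    (X Z : E) (c₁ c₂ : ℝ)
    (heq1 : ∀ v : E, dk v + ω Z v = c₁ * α v)
    (heq2 : ∀ v : E, dh v + ω X v = c₂ * α v)
    (hX : α X = 0) (hZ : α Z = 0) :
    dk X = -dh Z ∧ (dh Z ≠ 0 → dk X ≠ 0) := by
  have hkX : dk X = -ω Z X := LinearMap.apply_eq_neg_of_add_eq_mul_of_apply_eq_zero heq1 hX
  have hhZ : dh Z = -ω X Z := LinearMap.apply_eq_neg_of_add_eq_mul_of_apply_eq_zero heq2 hZ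
  have hkX_eq : dk X = -dh Z := by rw [hkX, hhZ, hanti X Z, neg_neg]
  exact ⟨hkX_eq, fun hhZ_ne => by rwa [hkX_eq, neg_ne_zero]⟩
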